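/- arXiv:1908.10779 — 7 statements merged into one kernel-verified Lean document; each statement's English description precedes it below -/
import Mathlib

section
/- Let S be a finite set and let L_γ and A be real S×S matrices, each with nonnegative off-diagonal entries and with every column summing to zero. For ε > 0 set L_ε = ε⁻¹·L_γ + A. Fix T ≥ 0 and let p_ε, p₀, p₁ : [0,T] → (S → ℝ) be continuously differentiable functions such that for all t ∈ [0,T]: (i) p_ε′(t) = L_ε·p_ε(t); (ii) L_γ·p₀(t) = 0; (iii) L_γ·p₁(t) = p₀′(t) − A·p₀(t); (iv) p_ε(0) = p₀(0). Then for every t ∈ [0,T], ‖p_ε(t) − p₀(t)‖₁ ≤ c(T)·ε, where c(T) = sup_{0≤s≤T} ‖p₁(s)‖₁ + ‖p₁(0)‖₁ + T·sup_{0≤s≤T} ‖A·p₁(s) − p₁′(s)‖₁ is independent of ε. -/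
/-- The ℓ1-norm of a vector indexed by a finite set: `‖v‖₁ = Σ_{s∈S} |v s|`. -/
noncomputable def l1norm {S : Type*} [Fintype S] (v : S → ℝ) : ℝ := ∑ s, |v s|

open Set Filter Topology

lemma l1norm_nonneg' {S : Type*} [Fintype S] (v : S → ℝ) : 0 ≤ l1norm v :=
  Finset.sum_nonneg fun _ _ => abs_nonneg _

lemma l1norm_add_le' {S : Type*} [Fintype S] (u v : S → ℝ) :
    l1norm (u + v) ≤ l1norm u + l1norm v := by
  rw [l1norm, l1norm, l1norm, ← Finset.sum_add_distrib]
  exact Finset.sum_le_sum fun s _ => abs_add_le _ _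

lemma l1norm_smul' {S : Type*} [Fintype S] {c : ℝ} (hc : 0 ≤ c) (v : S → ℝ) :
    l1norm (c • v) = c * l1norm v := by
  simp [l1norm, abs_mul, abs_of_nonneg hc, Finset.mul_sum]

lemma l1norm_neg' {S : Type*} [Fintype S] (v : S → ℝ) : l1norm (-v) = l1norm v := by
  simp [l1norm]

lemma sign_mul_self' (a : ℝ) : Real.sign a * a = |a| := by
  rcases lt_trichotomy a 0 with h | h | h
  · rw [Real.sign_of_neg h, abs_of_neg h]; ring
  · simp [h]
  · rw [Real.sign_of_pos h, abs_of_pos h]; ring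

lemma abs_sign_le' (a : ℝ) : |Real.sign a| ≤ 1 := by
  rcases lt_trichotomy a 0 with h | h | h
  · simp [Real.sign_of_neg h]
  · simp [h]
  · simp [Real.sign_of_pos h]

lemma gen_sign_sum_nonpos' {S : Type*} [Fintype S] (M : Matrix S S ℝ)
    (hoff : ∀ x y, x ≠ y → 0 ≤ M x y) (hcol : ∀ y, ∑ x, M x y = 0)
    (v σ : S → ℝ) (h1 : ∀ s, |σ s| ≤ 1) (h2 : ∀ s, σ s * v s = |v s|) :
    ∑ s, σ s * M.mulVec v s ≤ 0 := by
  have key : ∑ s, σ s * M.mulVec v s = ∑ y, ∑ s, σ s * (M s y * v y) := by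
    simp only [Matrix.mulVec, dotProduct, Finset.mul_sum]
    exact Finset.sum_comm
  rw [key]
  refine Finset.sum_nonpos fun y _ => ?_
  have hterm : ∀ s, σ s * (M s y * v y) ≤ M s y * |v y| := by
    intro s
    by_cases hs : s = y
    · subst hs
      have h : σ s * (M s s * v s) = M s s * |v s| := by rw [← h2 s]; ring
      rw [h]
    · have h0 : 0 ≤ M s y := hoff s y hs
      have hb : σ s * v y ≤ |v y| :=
        calc σ s * v y ≤ |σ s * v y| := le_abs_self _
        _ = |σ s| * |v y| := abs_mul _ _
        _ ≤ 1 * |v y| := mul_le_mul_of_nonneg_right (h1 s) (abs_nonneg _)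
        _ = |v y| := one_mul _
      calc σ s * (M s y * v y) = M s y * (σ s * v y) := by ring
      _ ≤ M s y * |v y| := mul_le_mul_of_nonneg_left hb h0
  calc ∑ s, σ s * (M s y * v y) ≤ ∑ s, M s y * |v y| := Finset.sum_le_sum fun s _ => hterm s
  _ = (∑ s, M s y) * |v y| := by rw [Finset.sum_mul]
  _ = 0 := by rw [hcol y, zero_mul]


/-- Let `S` be a finite set and `Lγ`, `A` real `S×S` matrices with
nonnegative off-diagonal entries and zero column sums.  For `ε > 0` set
`Lε = ε⁻¹ • Lγ + A`.  If `pε, p₀, p₁ : [0,T] → (S → ℝ)` are continuously differentiable,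
`pε` solves `pε' = Lε · pε`, `p₀` lies in the kernel of `Lγ`, `p₁` solves the corrector
equation `Lγ · p₁ = p₀' − A · p₀`, and `pε(0) = p₀(0)`, then
`‖pε(t) − p₀(t)‖₁ ≤ c(T)·ε` on `[0,T]`, where
`c(T) = sup_{[0,T]} ‖p₁‖₁ + ‖p₁(0)‖₁ + T · sup_{[0,T]} ‖A·p₁ − p₁'‖₁`
is independent of `ε`. -/
theorem perturbation_convergence
    {S : Type*} [Fintype S]
    (Lγ A : Matrix S S ℝ)
    (hLγ_off : ∀ x y, x ≠ y → 0 ≤ Lγ x y) (hLγ_col : ∀ y, ∑ x, Lγ x y = 0)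
    (hA_off : ∀ x y, x ≠ y → 0 ≤ A x y) (hA_col : ∀ y, ∑ x, A x y = 0)
    (ε : ℝ) (hε : 0 < ε) (T : ℝ) (hT : 0 ≤ T)
    (pε p₀ p₁ pε' p₀' p₁' : ℝ → S → ℝ)
    (hpε : ∀ t ∈ Set.Icc (0:ℝ) T, HasDerivAt pε (pε' t) t)
    (hp₀ : ∀ t ∈ Set.Icc (0:ℝ) T, HasDerivAt p₀ (p₀' t) t)
    (hp₁ : ∀ t ∈ Set.Icc (0:ℝ) T, HasDerivAt p₁ (p₁' t) t)
    (hpεc : ContinuousOn pε' (Set.Icc (0:ℝ) T))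
    (hp₀c : ContinuousOn p₀' (Set.Icc (0:ℝ) T))
    (hp₁c : ContinuousOn p₁' (Set.Icc (0:ℝ) T))
    (hODE : ∀ t ∈ Set.Icc (0:ℝ) T, pε' t = (ε⁻¹ • Lγ + A).mulVec (pε t))
    (hker : ∀ t ∈ Set.Icc (0:ℝ) T, Lγ.mulVec (p₀ t) = 0)
    (hcorr : ∀ t ∈ Set.Icc (0:ℝ) T, Lγ.mulVec (p₁ t) = p₀' t - A.mulVec (p₀ t))
    (hinit : pε 0 = p₀ 0) :
    ∀ t ∈ Set.Icc (0:ℝ) T,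
      l1norm (pε t - p₀ t) ≤
        (sSup ((fun s => l1norm (p₁ s)) '' Set.Icc (0:ℝ) T)
          + l1norm (p₁ 0)
          + T * sSup ((fun s => l1norm (A.mulVec (p₁ s) - p₁' s)) '' Set.Icc (0:ℝ) T)) * ε := by
  classical
  set supP : ℝ := sSup ((fun s => l1norm (p₁ s)) '' Set.Icc (0:ℝ) T) with hsupPdef
  set supG : ℝ :=
    sSup ((fun s => l1norm (A.mulVec (p₁ s) - p₁' s)) '' Set.Icc (0:ℝ) T) with hsupGdef
  set M : Matrix S S ℝ := ε⁻¹ • Lγ + A with hM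
  set r : ℝ → S → ℝ := fun t => pε t - p₀ t - ε • p₁ t with hrdef
  set rd : ℝ → S → ℝ := fun t => pε' t - p₀' t - ε • p₁' t with hrddef
  set g : ℝ → S → ℝ := fun t => A.mulVec (p₁ t) - p₁' t with hgdef
  set f : ℝ → ℝ := fun t => l1norm (r t) with hfdef
  set σ : ℝ → S → ℝ :=
    fun u s => if r u s = 0 then Real.sign (rd u s) else Real.sign (r u s) with hσdef
  set D : ℝ → ℝ := fun u => ∑ s, σ u s * rd u s with hDdef
  -- M is a generator
  have hMoff : ∀ x y, x ≠ y → 0 ≤ M x y := by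
    intro x y hxy
    have h : (0:ℝ) ≤ ε⁻¹ * Lγ x y + A x y :=
      add_nonneg (mul_nonneg (inv_nonneg.2 hε.le) (hLγ_off x y hxy)) (hA_off x y hxy)
    simpa [hM, Matrix.add_apply, Matrix.smul_apply, smul_eq_mul] using h
  have hMcol : ∀ y, ∑ x, M x y = 0 := by
    intro y
    simp [hM, Matrix.add_apply, Matrix.smul_apply, smul_eq_mul, Finset.sum_add_distrib,
      ← Finset.mul_sum, hLγ_col, hA_col]
  -- derivative of r
  have hrd : ∀ u ∈ Set.Icc (0:ℝ) T, HasDerivAt r (rd u) u := fun u hu =>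
    ((hpε u hu).sub (hp₀ u hu)).sub ((hp₁ u hu).const_smul ε)
  have hrds : ∀ u ∈ Set.Icc (0:ℝ) T, ∀ s, HasDerivAt (fun z => r z s) (rd u s) u :=
    fun u hu s => hasDerivAt_pi.1 (hrd u hu) s
  -- the ODE satisfied by r
  have hr' : ∀ u ∈ Set.Icc (0:ℝ) T, rd u = M.mulVec (r u) + ε • g u := by
    intro u hu
    have h1 := hODE u hu
    have h2 := hker u hu
    have h3 := hcorr u hu
    have e : M.mulVec (r u) = pε' u - A.mulVec (p₀ u)
        - ε • (ε⁻¹ • (p₀' u - A.mulVec (p₀ u)) + A.mulVec (p₁ u)) := by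
      simp only [hrdef]
      rw [Matrix.mulVec_sub, Matrix.mulVec_sub, Matrix.mulVec_smul, ← h1]
      congr 1
      · congr 1
        rw [hM, Matrix.add_mulVec, Matrix.smul_mulVec, h2, smul_zero, zero_add]
      · rw [hM, Matrix.add_mulVec, Matrix.smul_mulVec, h3]
    simp only [hrddef, hgdef]
    rw [e, smul_add, smul_smul, mul_inv_cancel₀ (ne_of_gt hε), one_smul, smul_sub]
    abel
  -- continuity
  have hl1cont : Continuous (l1norm : (S → ℝ) → ℝ) :=
    continuous_finset_sum _ fun s _ => (continuous_apply s).abs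
  have hrc : ContinuousOn r (Set.Icc (0:ℝ) T) :=
    fun u hu => (hrd u hu).continuousAt.continuousWithinAt
  have hfc : ContinuousOn f (Set.Icc (0:ℝ) T) := hl1cont.comp_continuousOn hrc
  have hp₁cont : ContinuousOn p₁ (Set.Icc (0:ℝ) T) :=
    fun u hu => (hp₁ u hu).continuousAt.continuousWithinAt
  have hmulA : Continuous fun v : S → ℝ => A.mulVec v := by
    refine continuous_pi fun s => ?_
    simp only [Matrix.mulVec, dotProduct]
    exact continuous_finset_sum _ fun y _ => continuous_const.mul (continuous_apply y)
  have hGc : ContinuousOn (fun s => l1norm (A.mulVec (p₁ s) - p₁' s)) (Set.Icc (0:ℝ) T) :=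
    hl1cont.comp_continuousOn ((hmulA.comp_continuousOn hp₁cont).sub hp₁c)
  have hP₁c : ContinuousOn (fun s => l1norm (p₁ s)) (Set.Icc (0:ℝ) T) :=
    hl1cont.comp_continuousOn hp₁cont
  have bddG : BddAbove ((fun s => l1norm (A.mulVec (p₁ s) - p₁' s)) '' Set.Icc (0:ℝ) T) :=
    (isCompact_Icc.image_of_continuousOn hGc).bddAbove
  have bddP : BddAbove ((fun s => l1norm (p₁ s)) '' Set.Icc (0:ℝ) T) :=
    (isCompact_Icc.image_of_continuousOn hP₁c).bddAbove
  have hGle : ∀ u ∈ Set.Icc (0:ℝ) T, l1norm (g u) ≤ supG := by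
    intro u hu
    exact le_csSup bddG ⟨u, hu, rfl⟩
  have hsupG0 : 0 ≤ supG :=
    le_trans (l1norm_nonneg' (g 0)) (hGle 0 ⟨le_rfl, hT⟩)
  -- properties of σ
  have hσ1 : ∀ u s, |σ u s| ≤ 1 := by
    intro u s
    simp only [hσdef]
    by_cases h : r u s = 0 <;> simp [h, abs_sign_le']
  have hσ2 : ∀ u s, σ u s * r u s = |r u s| := by
    intro u s
    simp only [hσdef]
    by_cases h : r u s = 0
    · simp [h]
    · simp [h, sign_mul_self']
  -- slope tendsto
  have hslope : ∀ u ∈ Set.Ico (0:ℝ) T,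
      Tendsto (fun z => (z - u)⁻¹ * (f z - f u)) (𝓝[>] u) (𝓝 (D u)) := by
    intro u hu
    have hu' : u ∈ Set.Icc (0:ℝ) T := Set.Ico_subset_Icc_self hu
    have base : ∀ s, Tendsto (fun z => (z - u)⁻¹ * (r z s - r u s)) (𝓝[>] u) (𝓝 (rd u s)) := by
      intro s
      have h := hasDerivAt_iff_tendsto_slope.1 (hrds u hu' s)
      have hmono : (𝓝[>] u) ≤ 𝓝[≠] u :=
        nhdsWithin_mono _ fun z hz => ne_of_gt hz
      have h2 := h.mono_left hmono
      refine h2.congr fun z => ?_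
      simp [slope_def_field, div_eq_inv_mul]
    have per : ∀ s, Tendsto (fun z => (z - u)⁻¹ * (|r z s| - |r u s|)) (𝓝[>] u)
        (𝓝 (σ u s * rd u s)) := by
      intro s
      by_cases h0 : r u s = 0
      · have habs : Tendsto (fun z => |(z - u)⁻¹ * (r z s - r u s)|) (𝓝[>] u)
            (𝓝 |rd u s|) := (base s).abs
        have heq : ∀ᶠ z in 𝓝[>] u,
            |(z - u)⁻¹ * (r z s - r u s)| = (z - u)⁻¹ * (|r z s| - |r u s|) := by
          filter_upwards [self_mem_nhdsWithin] with z hz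
          have hz' : (0:ℝ) < z - u := sub_pos.2 hz
          rw [h0, abs_mul, abs_of_pos (inv_pos.2 hz'), sub_zero, abs_zero, sub_zero]
        have hfin := habs.congr' heq
        have hval : σ u s * rd u s = |rd u s| := by
          simp only [hσdef, if_pos h0]; exact sign_mul_self' _
        rw [hval]; exact hfin
      · have hc : ContinuousAt (fun z => r z s) u := (hrds u hu' s).continuousAt
        have hev : ∀ᶠ z in 𝓝 u, |r z s| = Real.sign (r u s) * r z s := by
          rcases lt_or_gt_of_ne h0 with hneg | hpos
          · have hev0 : ∀ᶠ z in 𝓝 u, r z s < 0 := hc (Iio_mem_nhds hneg)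
            filter_upwards [hev0] with z hz
            rw [abs_of_neg hz, Real.sign_of_neg hneg]; ring
          · have hev0 : ∀ᶠ z in 𝓝 u, 0 < r z s := hc (Ioi_mem_nhds hpos)
            filter_upwards [hev0] with z hz
            rw [abs_of_pos hz, Real.sign_of_pos hpos]; ring
        have heq : ∀ᶠ z in 𝓝[>] u,
            Real.sign (r u s) * ((z - u)⁻¹ * (r z s - r u s)) =
              (z - u)⁻¹ * (|r z s| - |r u s|) := by
          filter_upwards [hev.filter_mono nhdsWithin_le_nhds] with z hz
          rw [hz, ← sign_mul_self' (r u s)]; ring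
        have hfin := ((base s).const_mul (Real.sign (r u s))).congr' heq
        have hval : σ u s * rd u s = Real.sign (r u s) * rd u s := by
          simp only [hσdef, if_neg h0]
        rw [hval]; exact hfin
    have hsum := tendsto_finset_sum Finset.univ (fun s (_ : s ∈ Finset.univ) => per s)
    simp only [hDdef]
    refine hsum.congr fun z => ?_
    simp only [hfdef, l1norm]
    rw [← Finset.sum_sub_distrib, ← Finset.mul_sum]
  -- the differential inequality
  have hbound : ∀ u ∈ Set.Ico (0:ℝ) T, D u ≤ 0 * f u + ε * supG := by
    intro u hu
    have hu' : u ∈ Set.Icc (0:ℝ) T := Set.Ico_subset_Icc_self hu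
    have hrw : ∀ s, σ u s * rd u s = σ u s * M.mulVec (r u) s + ε * (σ u s * g u s) := by
      intro s
      rw [hr' u hu']
      simp only [Pi.add_apply, Pi.smul_apply, smul_eq_mul]
      ring
    have hsg : ∑ s, σ u s * g u s ≤ l1norm (g u) := by
      refine Finset.sum_le_sum fun s _ => ?_
      calc σ u s * g u s ≤ |σ u s * g u s| := le_abs_self _
      _ = |σ u s| * |g u s| := abs_mul _ _
      _ ≤ 1 * |g u s| := mul_le_mul_of_nonneg_right (hσ1 u s) (abs_nonneg _)
      _ = |g u s| := one_mul _
    have hMsum : ∑ s, σ u s * M.mulVec (r u) s ≤ 0 :=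
      gen_sign_sum_nonpos' M hMoff hMcol (r u) (σ u) (hσ1 u) (hσ2 u)
    have hDle : D u ≤ 0 + ε * l1norm (g u) := by
      simp only [hDdef]
      calc ∑ s, σ u s * rd u s
          = (∑ s, σ u s * M.mulVec (r u) s) + ε * ∑ s, σ u s * g u s := by
            simp only [hrw]
            rw [Finset.sum_add_distrib, Finset.mul_sum]
      _ ≤ 0 + ε * l1norm (g u) :=
            add_le_add hMsum (mul_le_mul_of_nonneg_left hsg hε.le)
    calc D u ≤ 0 + ε * l1norm (g u) := hDle
    _ ≤ 0 * f u + ε * supG := by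
        rw [zero_mul]
        exact add_le_add le_rfl (mul_le_mul_of_nonneg_left (hGle u hu') hε.le)
  -- Gronwall
  have hliminf : ∀ x ∈ Set.Ico (0:ℝ) T, ∀ c, D x < c →
      ∃ᶠ z in 𝓝[>] x, (z - x)⁻¹ * (f z - f x) < c := by
    intro x hx c hc
    exact ((hslope x hx).eventually_lt_const hc).frequently
  have key := le_gronwallBound_of_liminf_deriv_right_le (f := f) (f' := D)
    (δ := f 0) (K := 0) (ε := ε * supG) hfc hliminf le_rfl hbound
  -- value at 0
  have hr0 : r 0 = -(ε • p₁ 0) := by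
    simp only [hrdef]
    rw [hinit, sub_self, zero_sub]
  have hf0 : f 0 = ε * l1norm (p₁ 0) := by
    simp only [hfdef]
    rw [hr0, l1norm_neg', l1norm_smul' hε.le]
  -- conclusion
  intro t ht
  have hkey := key t ht
  rw [gronwallBound_K0, sub_zero, hf0] at hkey
  have hdecomp : pε t - p₀ t = r t + ε • p₁ t := by
    simp only [hrdef]; abel
  have hP : l1norm (p₁ t) ≤ supP := le_csSup bddP ⟨t, ht, rfl⟩
  have htT : ε * supG * t ≤ ε * supG * T :=
    mul_le_mul_of_nonneg_left ht.2 (mul_nonneg hε.le hsupG0)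
  calc l1norm (pε t - p₀ t) = l1norm (r t + ε • p₁ t) := by rw [hdecomp]
  _ ≤ l1norm (r t) + l1norm (ε • p₁ t) := l1norm_add_le' _ _
  _ = f t + ε * l1norm (p₁ t) := by rw [l1norm_smul' hε.le]
  _ ≤ (ε * l1norm (p₁ 0) + ε * supG * t) + ε * supP :=
      add_le_add hkey (mul_le_mul_of_nonneg_left hP hε.le)
  _ ≤ (supP + l1norm (p₁ 0) + T * supG) * ε := by nlinarith [htT]
end

section
/- Let b ≥ 0 and d > 0. If p : ℕ → ℝ satisfies p(x) ≥ 0 for all x, Σ_{x∈ℕ} p(x) = 1, and b·p(x−1) + d·(x+1)·p(x+1) − (b + d·x)·p(x) = 0 for every x ∈ ℕ (with the convention p(−1) := 0), then p(x) = 𝒫(x; b/d) for every x ∈ ℕ. That is, the Poisson distribution with mean b/d is the unique stationary PMF of the production–degradation network ∅ → X at rate b and X → ∅ at per-molecule rate d. -/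
/-- The Poisson probability mass function with mean `lam`: `𝒫(x;λ) = e^{−λ} λ^x / x!`. -/
noncomputable def poissonPMF (lam : ℝ) (x : ℕ) : ℝ :=
  Real.exp (-lam) * lam ^ x / (Nat.factorial x : ℝ)

/-- Let `b ≥ 0` and `d > 0`.  Any PMF `p` on `ℕ` satisfying the
stationarity condition of the birth–death chain with birth rate `b` and death rate
`d·x`, namely `b·p(x−1) + d·(x+1)·p(x+1) − (b + d·x)·p(x) = 0` for all `x` (with the
convention `p(−1) = 0`), equals the Poisson PMF with mean `b/d`. -/
theorem poisson_unique_stationary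
    (b d : ℝ) (hb : 0 ≤ b) (hd : 0 < d) (p : ℕ → ℝ)
    (hnn : ∀ x, 0 ≤ p x)
    (hsum : ∑' x : ℕ, p x = 1)
    (hstat : ∀ x : ℕ,
      b * (if x = 0 then 0 else p (x - 1)) + d * ((x : ℝ) + 1) * p (x + 1)
        - (b + d * (x : ℝ)) * p x = 0) :
    ∀ x : ℕ, p x = poissonPMF (b / d) x := by
  set lam := b / d with hlam
  -- detailed balance
  have hdb : ∀ x : ℕ, d * ((x : ℝ) + 1) * p (x + 1) = b * p x := by
    intro x
    induction x with
    | zero =>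
      have h := hstat 0
      simp at h
      push_cast
      linarith
    | succ n ih =>
      have h := hstat (n + 1)
      simp only [Nat.succ_ne_zero, if_false, Nat.add_sub_cancel] at h
      push_cast at h ⊢
      linarith
  -- explicit formula
  have hform : ∀ x : ℕ, p x = p 0 * lam ^ x / (Nat.factorial x : ℝ) := by
    intro x
    induction x with
    | zero => simp
    | succ n ih =>
      have h := hdb n
      have hx1 : (0:ℝ) < (n : ℝ) + 1 := by positivity
      have : p (n + 1) = b * p n / (d * ((n : ℝ) + 1)) := by
        field_simp at h ⊢
        linarith
      rw [this, ih, Nat.factorial_succ, hlam]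
      push_cast
      field_simp
      rw [pow_succ, mul_assoc (p 0) d, show d * ((b / d) ^ n * (b / d)) = b * (b / d) ^ n by
        rw [mul_comm d, mul_assoc, div_mul_cancel₀ b hd.ne', mul_comm]]
      ring
  -- sum of the geometric-factorial series
  have hexp : HasSum (fun x : ℕ => lam ^ x / (Nat.factorial x : ℝ)) (Real.exp lam) := by
    rw [Real.exp_eq_exp_ℝ]
    exact NormedSpace.expSeries_div_hasSum_exp lam
  have hsum2 : ∑' x : ℕ, p x = p 0 * Real.exp lam := by
    calc ∑' x : ℕ, p x = ∑' x : ℕ, p 0 * (lam ^ x / (Nat.factorial x : ℝ)) := by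
          apply tsum_congr; intro x; rw [hform x]; ring
      _ = p 0 * Real.exp lam := by rw [(hexp.mul_left (p 0)).tsum_eq]
  have hp0 : p 0 = Real.exp (-lam) := by
    have := hsum2.symm.trans hsum
    have hne : Real.exp lam ≠ 0 := Real.exp_ne_zero lam
    rw [Real.exp_neg]
    field_simp
    linarith
  intro x
  rw [hform x, hp0, poissonPMF]
end

section
/- Let α₁, α₂, γ₁ ≥ 0 and γ₀ > 0, and for ε > 0 put Λ_ε = (γ₁ + ε·α₁)/(γ₀ + ε·α₂). Then: (a) the Poisson PMF 𝒫(·; Λ_ε) is the unique PMF p satisfying, for every x ∈ ℕ, (α₁ + γ₁/ε)·p(x−1) + (α₂ + γ₀/ε)·(x+1)·p(x+1) − ((α₁ + γ₁/ε) + (α₂ + γ₀/ε)·x)·p(x) = 0 (with p(−1) := 0), i.e. it is the unique stationary PMF of the output network obtained by embedding the stochastic morpher X → ∅ at rate γ₀/ε and Y₁ → Y₁ + X at rate γ₁/ε (with one copy of Y₁) into the input network ∅ ⇌ X with rates α₁, α₂; (b) Σ_{x∈ℕ} |𝒫(x; Λ_ε) − 𝒫(x; γ₁/γ₀)| → 0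 as ε → 0⁺; and (c) if α₂ > 0, then Σ_{x∈ℕ} |𝒫(x; Λ_ε) − 𝒫(x; α₁/α₂)| → 0 as ε → ∞. In particular, the limiting stationary PMF as ε → 0 is independent of the input rate coefficients α₁, α₂ (asymptotic robust perfect adaptation). -/
lemma tsum_pow_div_fact (x : ℝ) : ∑' n : ℕ, x ^ n / (Nat.factorial n : ℝ) = Real.exp x := by
  rw [Real.exp_eq_exp_ℝ, NormedSpace.exp_eq_tsum_div]

lemma poisson_succ (lam : ℝ) (x : ℕ) :
    ((x : ℝ) + 1) * poissonPMF lam (x + 1) = lam * poissonPMF lam x := by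
  have hx : (Nat.factorial x : ℝ) ≠ 0 := Nat.cast_ne_zero.2 (Nat.factorial_ne_zero x)
  simp only [poissonPMF, Nat.factorial_succ, Nat.cast_mul, Nat.cast_add, Nat.cast_one, pow_succ]
  field_simp

lemma poisson_nonneg {lam : ℝ} (h : 0 ≤ lam) (x : ℕ) : 0 ≤ poissonPMF lam x := by
  unfold poissonPMF; positivity

lemma summable_poisson (lam : ℝ) : Summable (fun x : ℕ => poissonPMF lam x) := by
  unfold poissonPMF
  simp only [mul_div_assoc]
  exact (Real.summable_pow_div_factorial lam).mul_left _

lemma tsum_poisson (lam : ℝ) : ∑' x : ℕ, poissonPMF lam x = 1 := by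
  unfold poissonPMF
  simp only [mul_div_assoc]
  rw [tsum_mul_left, tsum_pow_div_fact, ← Real.exp_add]
  simp

lemma l1_bound {lam mu : ℝ} (h0 : 0 ≤ lam) (h : lam ≤ mu) :
    ∑' x : ℕ, |poissonPMF mu x - poissonPMF lam x| ≤ 2 * (Real.exp (mu - lam) - 1) := by
  set g : ℕ → ℝ := fun x =>
    (Real.exp (-lam) - Real.exp (-mu)) * (mu ^ x / (Nat.factorial x : ℝ))
      + Real.exp (-lam) * ((mu ^ x - lam ^ x) / (Nat.factorial x : ℝ)) with hg
  have hmu : 0 ≤ mu := le_trans h0 h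
  have hexp : Real.exp (-mu) ≤ Real.exp (-lam) := Real.exp_le_exp.2 (by linarith)
  have hpb : ∀ x : ℕ, |poissonPMF mu x - poissonPMF lam x| ≤ g x := by
    intro x
    have hfx : (0:ℝ) < (Nat.factorial x : ℝ) := by positivity
    have hpow : lam ^ x ≤ mu ^ x := pow_le_pow_left₀ h0 h x
    have key : poissonPMF mu x - poissonPMF lam x =
        -((Real.exp (-lam) - Real.exp (-mu)) * (mu ^ x / (Nat.factorial x : ℝ)))
          + Real.exp (-lam) * ((mu ^ x - lam ^ x) / (Nat.factorial x : ℝ)) := by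
      unfold poissonPMF; field_simp; ring
    rw [key]
    refine le_trans (abs_add_le _ _) ?_
    rw [abs_neg]
    have h1 : |(Real.exp (-lam) - Real.exp (-mu)) * (mu ^ x / (Nat.factorial x : ℝ))|
        = (Real.exp (-lam) - Real.exp (-mu)) * (mu ^ x / (Nat.factorial x : ℝ)) := by
      apply abs_of_nonneg
      apply mul_nonneg (by linarith) (by positivity)
    have h2 : |Real.exp (-lam) * ((mu ^ x - lam ^ x) / (Nat.factorial x : ℝ))|
        = Real.exp (-lam) * ((mu ^ x - lam ^ x) / (Nat.factorial x : ℝ)) := by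
      apply abs_of_nonneg
      have : 0 ≤ mu ^ x - lam ^ x := by linarith
      positivity
    rw [h1, h2, hg]
  have hsg : Summable g := by
    apply Summable.add
    · exact ((Real.summable_pow_div_factorial mu).mul_left _)
    · apply Summable.mul_left
      simp only [sub_div]
      exact (Real.summable_pow_div_factorial mu).sub (Real.summable_pow_div_factorial lam)
  have hsd : Summable (fun x : ℕ => |poissonPMF mu x - poissonPMF lam x|) :=
    Summable.of_nonneg_of_le (fun x => abs_nonneg _) hpb hsg
  refine le_trans (Summable.tsum_le_tsum hpb hsd hsg) ?_
  have : ∑' x : ℕ, g x = 2 * (Real.exp (mu - lam) - 1) := by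
    rw [hg]
    rw [Summable.tsum_add (((Real.summable_pow_div_factorial mu).mul_left _))
      (by apply Summable.mul_left; simp only [sub_div];
          exact (Real.summable_pow_div_factorial mu).sub (Real.summable_pow_div_factorial lam))]
    rw [tsum_mul_left, tsum_mul_left, tsum_pow_div_fact]
    have : ∑' x : ℕ, (mu ^ x - lam ^ x) / (Nat.factorial x : ℝ)
        = Real.exp mu - Real.exp lam := by
      simp only [sub_div]
      rw [Summable.tsum_sub (Real.summable_pow_div_factorial mu) (Real.summable_pow_div_factorial lam),
        tsum_pow_div_fact, tsum_pow_div_fact]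
    rw [this, sub_mul, mul_sub, ← Real.exp_add, ← Real.exp_add, ← Real.exp_add]
    simp only [neg_add_cancel, Real.exp_zero]
    ring_nf
  linarith [le_of_eq this]

lemma l1_bound' {lam mu : ℝ} (h0 : 0 ≤ lam) (h0' : 0 ≤ mu) :
    ∑' x : ℕ, |poissonPMF mu x - poissonPMF lam x| ≤ 2 * (Real.exp |mu - lam| - 1) := by
  rcases le_total lam mu with h | h
  · rw [abs_of_nonneg (by linarith)]; exact l1_bound h0 h
  · rw [abs_of_nonpos (by linarith), neg_sub]
    have h1 : ∑' x : ℕ, |poissonPMF mu x - poissonPMF lam x|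
        = ∑' x : ℕ, |poissonPMF lam x - poissonPMF mu x| :=
      tsum_congr fun x => abs_sub_comm _ _
    rw [h1]; exact l1_bound h0' h

lemma l1_tendsto {l : Filter ℝ} {Λ : ℝ → ℝ} {lam : ℝ} (hlam : 0 ≤ lam)
    (hΛ : Filter.Tendsto Λ l (nhds lam)) (hpos : ∀ᶠ ε in l, 0 ≤ Λ ε) :
    Filter.Tendsto (fun ε => ∑' x : ℕ, |poissonPMF (Λ ε) x - poissonPMF lam x|) l (nhds 0) := by
  have h1 : Filter.Tendsto (fun ε => |Λ ε - lam|) l (nhds 0) := by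
    simpa using (hΛ.sub_const lam).abs
  have h2 : Filter.Tendsto (fun ε => 2 * (Real.exp |Λ ε - lam| - 1)) l (nhds 0) := by
    have := ((Real.continuous_exp.continuousAt (x := 0)).tendsto.comp h1).sub_const 1
    simpa using this.const_mul 2
  apply tendsto_of_tendsto_of_tendsto_of_le_of_le' tendsto_const_nhds h2
  · exact Filter.Eventually.of_forall fun ε => tsum_nonneg fun x => abs_nonneg _
  · filter_upwards [hpos] with ε hε
    exact l1_bound' hlam hε

lemma poisson_stationary (b d : ℝ) (hd : 0 < d) (x : ℕ) :
    b * (if x = 0 then 0 else poissonPMF (b / d) (x - 1))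
      + d * ((x : ℝ) + 1) * poissonPMF (b / d) (x + 1)
      - (b + d * (x : ℝ)) * poissonPMF (b / d) x = 0 := by
  have hb' : b = (b / d) * d := by field_simp
  cases x with
  | zero =>
    have h := poisson_succ (b / d) 0
    push_cast at h ⊢
    linear_combination d * h - poissonPMF (b / d) 0 * hb'
  | succ n =>
    have h1 := poisson_succ (b / d) n
    have h2 := poisson_succ (b / d) (n + 1)
    simp only [Nat.succ_ne_zero, if_neg, Nat.add_sub_cancel]
    push_cast at h1 h2 ⊢
    linear_combination d * h2 - d * h1
      + (poissonPMF (b / d) n - poissonPMF (b / d) (n + 1)) * hb'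

lemma unique_stationary (b d : ℝ) (hd : 0 < d) (p : ℕ → ℝ)
    (hsum : ∑' x : ℕ, p x = 1)
    (heq : ∀ x : ℕ,
      b * (if x = 0 then 0 else p (x - 1)) + d * ((x : ℝ) + 1) * p (x + 1)
        - (b + d * (x : ℝ)) * p x = 0) :
    ∀ x : ℕ, p x = poissonPMF (b / d) x := by
  have key : ∀ x : ℕ, d * ((x : ℝ) + 1) * p (x + 1) = b * p x := by
    intro x
    induction x with
    | zero =>
      have h := heq 0
      push_cast at h ⊢
      linear_combination h
    | succ n ih =>
      have h := heq (n + 1)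
      simp only [Nat.succ_ne_zero, if_neg, Nat.add_sub_cancel] at h
      push_cast at h ih ⊢
      linear_combination h + ih
  have pform : ∀ x : ℕ, p x = p 0 * (b / d) ^ x / (Nat.factorial x : ℝ) := by
    intro x
    induction x with
    | zero => simp
    | succ n ih =>
      have h := key n
      have hn1 : ((n : ℝ) + 1) ≠ 0 := by positivity
      have hfn : (Nat.factorial n : ℝ) ≠ 0 := Nat.cast_ne_zero.2 (Nat.factorial_ne_zero n)
      have : p (n + 1) = (b / d) * p n / ((n : ℝ) + 1) := by
        field_simp at h ⊢
        linarith
      rw [this, ih]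
      rw [Nat.factorial_succ]
      push_cast
      field_simp
      have hdd : d * (b / d) = b := by field_simp
      rw [pow_succ]
      linear_combination (-(p 0 * (b / d) ^ n)) * hdd
  have hsum2 : p 0 * Real.exp (b / d) = 1 := by
    rw [← hsum]
    rw [tsum_congr pform]
    simp only [mul_div_assoc]
    rw [tsum_mul_left, tsum_pow_div_fact]
  have hp0 : p 0 = Real.exp (-(b / d)) := by
    have he : Real.exp (b / d) ≠ 0 := Real.exp_ne_zero _
    rw [Real.exp_neg]
    field_simp
    linarith [hsum2]
  intro x
  rw [pform x, hp0]
  unfold poissonPMF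
  ring

/-- For the output network obtained by embedding the stochastic morpher
`X → ∅` at rate `γ₀/ε`, `Y₁ → Y₁ + X` at rate `γ₁/ε` into the input network `∅ ⇌ X`
with rates `α₁, α₂` (a birth–death chain with birth rate `α₁ + γ₁/ε` and death rate
`(α₂ + γ₀/ε)·x`):
(a) the Poisson PMF with mean `Λ_ε = (γ₁ + ε α₁)/(γ₀ + ε α₂)` is its unique stationary PMF;
(b) it converges in ℓ1 to the Poisson PMF with mean `γ₁/γ₀` as `ε → 0⁺`;
(c) if `α₂ > 0`, it converges in ℓ1 to the Poisson PMF with mean `α₁/α₂` as `ε → ∞`. -/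
theorem morpher_production_degradation
    (α₁ α₂ γ₁ γ₀ : ℝ) (hα₁ : 0 ≤ α₁) (hα₂ : 0 ≤ α₂) (hγ₁ : 0 ≤ γ₁) (hγ₀ : 0 < γ₀) :
    ∀ Λ : ℝ → ℝ, (Λ = fun ε => (γ₁ + ε * α₁) / (γ₀ + ε * α₂)) →
    ((∀ ε : ℝ, 0 < ε →
        (∀ x : ℕ,
          (α₁ + γ₁ / ε) * (if x = 0 then 0 else poissonPMF (Λ ε) (x - 1))
            + (α₂ + γ₀ / ε) * ((x : ℝ) + 1) * poissonPMF (Λ ε) (x + 1)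
            - ((α₁ + γ₁ / ε) + (α₂ + γ₀ / ε) * (x : ℝ)) * poissonPMF (Λ ε) x = 0) ∧
        (∀ p : ℕ → ℝ, (∀ x, 0 ≤ p x) → (∑' x : ℕ, p x = 1) →
          (∀ x : ℕ,
            (α₁ + γ₁ / ε) * (if x = 0 then 0 else p (x - 1))
              + (α₂ + γ₀ / ε) * ((x : ℝ) + 1) * p (x + 1)
              - ((α₁ + γ₁ / ε) + (α₂ + γ₀ / ε) * (x : ℝ)) * p x = 0) →
          ∀ x : ℕ, p x = poissonPMF (Λ ε) x)) ∧
     Filter.Tendsto (fun ε : ℝ => ∑' x : ℕ, |poissonPMF (Λ ε) x - poissonPMF (γ₁ / γ₀) x|)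
       (nhdsWithin 0 (Set.Ioi 0)) (nhds 0) ∧
     (0 < α₂ →
       Filter.Tendsto (fun ε : ℝ => ∑' x : ℕ, |poissonPMF (Λ ε) x - poissonPMF (α₁ / α₂) x|)
         Filter.atTop (nhds 0))) := by
  intro Λ hΛ
  have hΛval : ∀ ε : ℝ, 0 < ε → Λ ε = (α₁ + γ₁ / ε) / (α₂ + γ₀ / ε) := by
    intro ε hε
    have hε' : ε ≠ 0 := ne_of_gt hε
    have hden : γ₀ + ε * α₂ > 0 := by positivity
    have hden2 : α₂ + γ₀ / ε > 0 := by positivity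
    rw [hΛ]
    rw [div_eq_div_iff (ne_of_gt hden) (ne_of_gt hden2)]
    field_simp
    ring
  have hΛnn : ∀ ε : ℝ, 0 < ε → 0 ≤ Λ ε := by
    intro ε hε
    rw [hΛ]
    have h1 : 0 ≤ γ₁ + ε * α₁ := by positivity
    have h2 : 0 ≤ γ₀ + ε * α₂ := by positivity
    exact div_nonneg h1 h2
  refine ⟨?_, ?_, ?_⟩
  · intro ε hε
    have hd : 0 < α₂ + γ₀ / ε := by positivity
    constructor
    · intro x
      have h := poisson_stationary (α₁ + γ₁ / ε) (α₂ + γ₀ / ε) hd x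
      rw [hΛval ε hε]
      exact h
    · intro p _ hsum heq
      intro x
      rw [hΛval ε hε]
      exact unique_stationary (α₁ + γ₁ / ε) (α₂ + γ₀ / ε) hd p hsum heq x
  · apply l1_tendsto (div_nonneg hγ₁ hγ₀.le)
    · have hc : Filter.Tendsto Λ (nhds 0) (nhds (γ₁ / γ₀)) := by
        rw [hΛ]
        have h1 : Filter.Tendsto (fun ε : ℝ => γ₁ + ε * α₁) (nhds 0) (nhds (γ₁ + 0 * α₁)) := by
          exact (continuous_const.add (continuous_id.mul continuous_const)).tendsto 0
        have h2 : Filter.Tendsto (fun ε : ℝ => γ₀ + ε * α₂) (nhds 0) (nhds (γ₀ + 0 * α₂)) := by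
          exact (continuous_const.add (continuous_id.mul continuous_const)).tendsto 0
        have := h1.div h2 (by simpa using ne_of_gt hγ₀)
        simp only [zero_mul, add_zero] at this; exact this
      exact hc.mono_left nhdsWithin_le_nhds
    · filter_upwards [self_mem_nhdsWithin] with ε (hε : ε ∈ Set.Ioi 0)
      exact hΛnn ε hε
  · intro hα₂'
    apply l1_tendsto (div_nonneg hα₁ hα₂'.le)
    · have hc : Filter.Tendsto (fun ε : ℝ => (γ₁ / ε + α₁) / (γ₀ / ε + α₂))
          Filter.atTop (nhds ((0 + α₁) / (0 + α₂))) := by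
        have h1 : Filter.Tendsto (fun ε : ℝ => γ₁ / ε + α₁) Filter.atTop (nhds (0 + α₁)) :=
          (tendsto_const_nhds.div_atTop Filter.tendsto_id).add tendsto_const_nhds
        have h2 : Filter.Tendsto (fun ε : ℝ => γ₀ / ε + α₂) Filter.atTop (nhds (0 + α₂)) :=
          (tendsto_const_nhds.div_atTop Filter.tendsto_id).add tendsto_const_nhds
        exact h1.div h2 (by simpa using ne_of_gt hα₂')
      have heq : ∀ᶠ ε : ℝ in Filter.atTop,
          (fun ε : ℝ => (γ₁ / ε + α₁) / (γ₀ / ε + α₂)) ε = Λ ε := by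
        filter_upwards [Filter.eventually_gt_atTop 0] with ε hε
        rw [hΛ]
        have hε' : ε ≠ 0 := ne_of_gt hε
        have hden : γ₀ + ε * α₂ > 0 := by positivity
        have hden2 : γ₀ / ε + α₂ > 0 := by positivity
        rw [div_eq_div_iff (ne_of_gt hden2) (ne_of_gt hden)]
        field_simp
      have := hc.congr' heq
      simpa using this
    · filter_upwards [Filter.eventually_gt_atTop 0] with ε hε
      exact hΛnn ε hε
end

section
/- Fix k ≥ 1 and c, d > 0, and put σ = c/d. Consider the birth–death chain on ℕ with birth rate c (from x to x+1) and death rate d·x^{(k+1)} (from x to x−1), which is the reduced higher-resolution interfacing network ∅ → X at rate c together with Y + (k+1)X → Y + kX at rate d. Define w : ℕ → ℝ by w(x) = 0 for x < k and w(k+m) = σ^m / ∏_{l=1}^m (k+l)^{(k+1)} for m ≥ 0 (empty product = 1). Then Z = Σ_{x∈ℕ} w(x) is finite and positive, and π_σ = w/Z is the unique PMF satisfying, for every x ∈ ℕ, c·π(x−1) + d·(x+1)^{(k+1)}·π(x+1) − (c + d·x^{(k+1)})·π(x) = 0 (with π(−1) := 0). -/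
/-- The unnormalized stationary weights of the reduced higher-resolution interfacing
network with target copy-number `k` and ratio `σ = c/d`:
`w(x) = 0` for `x < k` and `w(k+m) = σ^m / ∏_{l=1}^m (k+l)^{(k+1)}`. -/
noncomputable def deathBirthWeight (k : ℕ) (σ : ℝ) (x : ℕ) : ℝ :=
  if x < k then 0
  else σ ^ (x - k) / ∏ l ∈ Finset.Icc 1 (x - k), ((k + l).descFactorial (k + 1) : ℝ)

lemma dbw_of_lt {k : ℕ} {σ : ℝ} {x : ℕ} (h : x < k) : deathBirthWeight k σ x = 0 := by
  simp [deathBirthWeight, h]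

lemma dbw_add (k : ℕ) (σ : ℝ) (m : ℕ) :
    deathBirthWeight k σ (k + m)
      = σ ^ m / ∏ l ∈ Finset.Icc 1 m, ((k + l).descFactorial (k + 1) : ℝ) := by
  simp [deathBirthWeight]

lemma dbw_desc_pos (k l : ℕ) (hl : 1 ≤ l) : 0 < (k + l).descFactorial (k + 1) := by
  rcases Nat.eq_zero_or_pos ((k + l).descFactorial (k + 1)) with h | h
  · rw [Nat.descFactorial_eq_zero_iff_lt] at h; omega
  · exact h

lemma dbw_desc_ge (k l : ℕ) (hl : 1 ≤ l) : l ≤ (k + l).descFactorial (k + 1) := by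
  rw [Nat.descFactorial_succ]
  have h1 : k + l - k = l := by omega
  rw [h1]
  have h2 : 0 < (k + l).descFactorial k := by
    rcases Nat.eq_zero_or_pos ((k + l).descFactorial k) with h | h
    · rw [Nat.descFactorial_eq_zero_iff_lt] at h; omega
    · exact h
  nlinarith

lemma dbw_prod_pos (k m : ℕ) :
    0 < ∏ l ∈ Finset.Icc 1 m, ((k + l).descFactorial (k + 1) : ℝ) := by
  apply Finset.prod_pos
  intro l hl
  have := dbw_desc_pos k l (Finset.mem_Icc.mp hl).1
  positivity

lemma dbw_prod_ge (k m : ℕ) :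
    (Nat.factorial m : ℝ) ≤ ∏ l ∈ Finset.Icc 1 m, ((k + l).descFactorial (k + 1) : ℝ) := by
  induction m with
  | zero => simp [Nat.factorial]
  | succ m ih =>
    rw [Finset.prod_Icc_succ_top (by omega), Nat.factorial_succ]
    push_cast
    have h1 : ((m + 1 : ℕ) : ℝ) ≤ ((k + (m + 1)).descFactorial (k + 1) : ℝ) := by
      exact_mod_cast dbw_desc_ge k (m + 1) (by omega)
    have h2 : (0 : ℝ) ≤ (Nat.factorial m : ℝ) := by positivity
    push_cast at h1
    have h3 : (1 : ℝ) ≤ (Nat.factorial m : ℝ) := by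
      exact_mod_cast Nat.one_le_iff_ne_zero.mpr (Nat.factorial_ne_zero m)
    nlinarith

lemma dbw_rec (k : ℕ) (σ : ℝ) (m : ℕ) :
    deathBirthWeight k σ (k + m + 1)
      = σ / ((k + m + 1).descFactorial (k + 1) : ℝ) * deathBirthWeight k σ (k + m) := by
  have h1 := dbw_add k σ (m + 1)
  have h2 := dbw_add k σ m
  have h3 : k + (m + 1) = k + m + 1 := by omega
  rw [h3] at h1
  rw [h1, h2, Finset.prod_Icc_succ_top (by omega : 1 ≤ m + 1)]
  have hD : ((k + (m + 1)).descFactorial (k + 1) : ℝ) ≠ 0 := by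
    have := dbw_desc_pos k (m + 1) (by omega); positivity
  have hP : (∏ l ∈ Finset.Icc 1 m, ((k + l).descFactorial (k + 1) : ℝ)) ≠ 0 :=
    (dbw_prod_pos k m).ne'
  rw [show k + (m + 1) = k + m + 1 from by omega] at hD ⊢
  field_simp
  ring

/-- For `k ≥ 1` and `c, d > 0` with `σ = c/d`, the weights
`w = deathBirthWeight k σ` are summable with positive total mass `Z`, and `π = w/Z`
is the unique PMF satisfying the stationarity condition of the birth–death chain on `ℕ`
with birth rate `c` and death rate `d·x^{(k+1)}` (the reduced higher-resolution
interfacing network `∅ → X` at rate `c` and `Y + (k+1)X → Y + kX` at rate `d`). -/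
theorem higher_resolution_stationary
    (k : ℕ) (hk : 1 ≤ k) (c d : ℝ) (hc : 0 < c) (hd : 0 < d) (σ : ℝ) (hσ : σ = c / d) :
    Summable (deathBirthWeight k σ) ∧
    0 < (∑' x : ℕ, deathBirthWeight k σ x) ∧
    (∀ π : ℕ → ℝ,
      (π = fun x => deathBirthWeight k σ x / ∑' y : ℕ, deathBirthWeight k σ y) →
      (((∀ x, 0 ≤ π x) ∧ Summable π ∧ (∑' x : ℕ, π x = 1) ∧
        (∀ x : ℕ,
          c * (if x = 0 then 0 else π (x - 1))
            + d * (((x + 1).descFactorial (k + 1) : ℝ)) * π (x + 1)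
            - (c + d * ((x.descFactorial (k + 1) : ℝ))) * π x = 0)) ∧
       (∀ p : ℕ → ℝ, (∀ x, 0 ≤ p x) → Summable p → (∑' x : ℕ, p x = 1) →
          (∀ x : ℕ,
            c * (if x = 0 then 0 else p (x - 1))
              + d * (((x + 1).descFactorial (k + 1) : ℝ)) * p (x + 1)
              - (c + d * ((x.descFactorial (k + 1) : ℝ))) * p x = 0) →
          p = π))) := by
  have hσpos : 0 < σ := by rw [hσ]; positivity
  have hdσ : d * σ = c := by rw [hσ]; field_simp
  -- nonnegativity of W
  have hWnn : ∀ x, 0 ≤ deathBirthWeight k σ x := by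
    intro x
    rw [deathBirthWeight]
    split
    · exact le_refl 0
    · exact div_nonneg (pow_nonneg hσpos.le _) (dbw_prod_pos k _).le
  -- summability
  have hWsum : Summable (deathBirthWeight k σ) := by
    rw [← summable_nat_add_iff k]
    refine Summable.of_nonneg_of_le (fun n => hWnn (n + k)) ?_
      (Real.summable_pow_div_factorial σ)
    intro n
    have h : n + k = k + n := by omega
    rw [h, dbw_add]
    have hf : (0 : ℝ) < Nat.factorial n := by positivity
    exact div_le_div_of_nonneg_left (pow_nonneg hσpos.le n) hf (dbw_prod_ge k n)
  have hWk : deathBirthWeight k σ k = 1 := by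
    have := dbw_add k σ 0
    simpa using this
  -- positivity of Z
  have hZpos : 0 < ∑' x : ℕ, deathBirthWeight k σ x := by
    have : 0 < deathBirthWeight k σ k := by rw [hWk]; norm_num
    exact Summable.tsum_pos hWsum hWnn k this
  -- detailed balance for W
  have hDBW : ∀ x : ℕ, c * deathBirthWeight k σ x
      = d * ((x + 1).descFactorial (k + 1) : ℝ) * deathBirthWeight k σ (x + 1) := by
    intro x
    rcases lt_or_ge x k with hx | hx
    · have h1 : deathBirthWeight k σ x = 0 := dbw_of_lt hx
      have h2 : ((x + 1).descFactorial (k + 1) : ℝ) = 0 := by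
        rw [Nat.cast_eq_zero, Nat.descFactorial_eq_zero_iff_lt]; omega
      rw [h1, h2]; ring
    · obtain ⟨m, rfl⟩ := Nat.exists_eq_add_of_le hx
      have hrec := dbw_rec k σ m
      have hD : ((k + m + 1).descFactorial (k + 1) : ℝ) ≠ 0 := by
        have h := dbw_desc_pos k (m + 1) (by omega)
        rw [show k + (m + 1) = k + m + 1 from by omega] at h
        positivity
      rw [hrec]
      have hcan : d * ((k + m + 1).descFactorial (k + 1) : ℝ)
          * (σ / ((k + m + 1).descFactorial (k + 1) : ℝ)) = d * σ := by
        rw [mul_assoc, mul_comm ((((k + m + 1).descFactorial (k + 1)) : ℕ) : ℝ),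
          div_mul_cancel₀ σ hD]
      calc c * deathBirthWeight k σ (k + m)
          = d * σ * deathBirthWeight k σ (k + m) := by rw [hdσ]
        _ = d * ((k + m + 1).descFactorial (k + 1) : ℝ)
              * (σ / ((k + m + 1).descFactorial (k + 1) : ℝ))
              * deathBirthWeight k σ (k + m) := by rw [hcan]
        _ = d * ((k + m + 1).descFactorial (k + 1) : ℝ)
              * (σ / ((k + m + 1).descFactorial (k + 1) : ℝ)
                * deathBirthWeight k σ (k + m)) := by ring
  refine ⟨hWsum, hZpos, ?_⟩
  intro π hπ
  subst hπ
  -- detailed balance for π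
  have hDBπ : ∀ x : ℕ,
      c * (deathBirthWeight k σ x / ∑' y : ℕ, deathBirthWeight k σ y)
        = d * ((x + 1).descFactorial (k + 1) : ℝ)
          * (deathBirthWeight k σ (x + 1) / ∑' y : ℕ, deathBirthWeight k σ y) := by
    intro x
    have h := hDBW x
    linear_combination h / (∑' y : ℕ, deathBirthWeight k σ y)
  have hstatπ : ∀ x : ℕ,
      c * (if x = 0 then 0
            else deathBirthWeight k σ (x - 1) / ∑' y : ℕ, deathBirthWeight k σ y)
        + d * (((x + 1).descFactorial (k + 1) : ℝ))
            * (deathBirthWeight k σ (x + 1) / ∑' y : ℕ, deathBirthWeight k σ y)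
        - (c + d * ((x.descFactorial (k + 1) : ℝ)))
            * (deathBirthWeight k σ x / ∑' y : ℕ, deathBirthWeight k σ y) = 0 := by
    intro x
    cases x with
    | zero =>
      have h0 := hDBπ 0
      have hz : ((Nat.descFactorial 0 (k + 1)) : ℝ) = 0 := by
        rw [Nat.zero_descFactorial_succ]; norm_num
      rw [if_pos rfl, hz]
      linarith
    | succ y =>
      have h1 := hDBπ y
      have h2 := hDBπ (y + 1)
      rw [if_neg (Nat.succ_ne_zero y), Nat.add_sub_cancel]
      linarith
  constructor
  · refine ⟨fun x => div_nonneg (hWnn x) hZpos.le, ?_, ?_, ?_⟩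
    · exact hWsum.div_const _
    · rw [tsum_div_const, div_self hZpos.ne']
    · exact hstatπ
  · intro p hpnn hpsum hp1 hpstat
    -- detailed balance for p
    have hGp : ∀ x : ℕ, c * p x = d * ((x + 1).descFactorial (k + 1) : ℝ) * p (x + 1) := by
      intro x
      induction x with
      | zero =>
        have h := hpstat 0
        have hz : ((Nat.descFactorial 0 (k + 1)) : ℝ) = 0 := by
          rw [Nat.zero_descFactorial_succ]; norm_num
        rw [if_pos rfl, hz] at h
        linarith
      | succ y ih =>
        have h := hpstat (y + 1)
        rw [if_neg (Nat.succ_ne_zero y), Nat.add_sub_cancel] at h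
        linarith
    -- p vanishes below k
    have hp0 : ∀ x, x < k → p x = 0 := by
      intro x hx
      have h := hGp x
      have hz : ((x + 1).descFactorial (k + 1) : ℝ) = 0 := by
        rw [Nat.cast_eq_zero, Nat.descFactorial_eq_zero_iff_lt]; omega
      rw [hz] at h
      have hcp : c * p x = 0 := by linarith
      exact (mul_eq_zero.mp hcp).resolve_left hc.ne'
    -- p is proportional to W
    have hprop : ∀ m : ℕ, p (k + m) = p k * deathBirthWeight k σ (k + m) := by
      intro m
      induction m with
      | zero => rw [Nat.add_zero, hWk]; ring
      | succ m ih =>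
        have hD : ((k + m + 1).descFactorial (k + 1) : ℝ) ≠ 0 := by
          have h := dbw_desc_pos k (m + 1) (by omega)
          rw [show k + (m + 1) = k + m + 1 from by omega] at h
          positivity
        have hdD : d * ((k + m + 1).descFactorial (k + 1) : ℝ) ≠ 0 :=
          mul_ne_zero hd.ne' hD
        have h := hGp (k + m)
        have hrec := dbw_rec k σ m
        have hcan : d * ((k + m + 1).descFactorial (k + 1) : ℝ)
            * (σ / ((k + m + 1).descFactorial (k + 1) : ℝ)) = d * σ := by
          rw [mul_assoc, mul_comm ((((k + m + 1).descFactorial (k + 1)) : ℕ) : ℝ),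
            div_mul_cancel₀ σ hD]
        rw [show k + (m + 1) = k + m + 1 from by omega]
        apply mul_left_cancel₀ hdD
        calc d * ((k + m + 1).descFactorial (k + 1) : ℝ) * p (k + m + 1)
            = c * p (k + m) := h.symm
          _ = d * σ * (p k * deathBirthWeight k σ (k + m)) := by rw [ih, ← hdσ]
          _ = d * ((k + m + 1).descFactorial (k + 1) : ℝ)
                * (σ / ((k + m + 1).descFactorial (k + 1) : ℝ))
                * (p k * deathBirthWeight k σ (k + m)) := by rw [hcan]
          _ = d * ((k + m + 1).descFactorial (k + 1) : ℝ)
                * (p k * (σ / ((k + m + 1).descFactorial (k + 1) : ℝ)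
                    * deathBirthWeight k σ (k + m))) := by ring
          _ = d * ((k + m + 1).descFactorial (k + 1) : ℝ)
                * (p k * deathBirthWeight k σ (k + m + 1)) := by rw [← hrec]
    have hpropx : ∀ x : ℕ, p x = p k * deathBirthWeight k σ x := by
      intro x
      rcases lt_or_ge x k with hx | hx
      · rw [hp0 x hx, dbw_of_lt hx]; ring
      · obtain ⟨m, rfl⟩ := Nat.exists_eq_add_of_le hx
        exact hprop m
    have hsum : p k * (∑' x : ℕ, deathBirthWeight k σ x) = 1 := by
      rw [← tsum_mul_left, ← hp1]
      exact tsum_congr fun x => (hpropx x).symm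
    have hpk : p k = 1 / (∑' x : ℕ, deathBirthWeight k σ x) :=
      eq_one_div_of_mul_eq_one_left hsum
    funext x
    rw [hpropx x, hpk]
    ring
end

section
/- Fix k ≥ 1 and for σ > 0 let π_σ be the unique stationary PMF of the birth–death chain on ℕ with birth rate c and death rate d·x^{(k+1)}, where σ = c/d (explicitly, π_σ(x) = 0 for x < k and π_σ(k+m) ∝ σ^m / ∏_{l=1}^m (k+l)^{(k+1)}). Then Σ_{x∈ℕ} |π_σ(x) − δ_{x,k}| → 0 as σ → 0⁺, where δ_{x,k} is the Kronecker-delta PMF centered at k. Hence in the limit of the time-scale separation the target species concentrates at the single copy-number value k. -/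
open Filter

section aux
variable (k : ℕ) (σ : ℝ)

lemma dbw_nonneg (hσ : 0 ≤ σ) (x : ℕ) : 0 ≤ deathBirthWeight k σ x := by
  unfold deathBirthWeight
  split
  · exact le_rfl
  · positivity

lemma dbw_self : deathBirthWeight k σ k = 1 := by
  simp [deathBirthWeight]

lemma dbw_le (hσ : 0 ≤ σ) (hk : 1 ≤ k) (x : ℕ) :
    deathBirthWeight k σ x ≤ (σ / 2) ^ (x - k) := by
  unfold deathBirthWeight
  split
  · positivity
  · rw [div_pow]
    apply div_le_div_of_nonneg_left (by positivity) (by positivity)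
    calc (2:ℝ) ^ (x - k) = ∏ _l ∈ Finset.Icc 1 (x-k), (2:ℝ) := by
          rw [Finset.prod_const, Nat.card_Icc, Nat.add_sub_cancel]
      _ ≤ ∏ l ∈ Finset.Icc 1 (x-k), ((k + l).descFactorial (k + 1) : ℝ) := by
          apply Finset.prod_le_prod (fun _ _ => by norm_num)
          intro l hl
          have h2 : 2 ≤ (k + l).descFactorial (k + 1) := by
            calc (2:ℕ) ≤ Nat.factorial (k+1) := by
                  have := Nat.factorial_le (Nat.succ_le_succ hk)
                  simpa using this
              _ = Nat.descFactorial (k+1) (k+1) := (Nat.descFactorial_self _).symm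
              _ ≤ (k+l).descFactorial (k+1) := Nat.descFactorial_le _ (by
                  have := (Finset.mem_Icc.mp hl).1; omega)
          exact_mod_cast h2

lemma geo_summable (hσ0 : 0 ≤ σ) (hσ1 : σ < 1) :
    Summable (fun x : ℕ => (σ/2)^(x-k)) := by
  apply (summable_nat_add_iff k).mp
  have : Summable (fun n : ℕ => (σ/2)^n) :=
    summable_geometric_of_lt_one (by positivity) (by linarith)
  simpa [Nat.add_sub_cancel] using this

lemma dbw_summable (hσ0 : 0 ≤ σ) (hσ1 : σ < 1) (hk : 1 ≤ k) :
    Summable (deathBirthWeight k σ) :=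
  Summable.of_nonneg_of_le (dbw_nonneg k σ hσ0) (dbw_le k σ hσ0 hk)
    (geo_summable k σ hσ0 hσ1)

end aux


/-- For `k ≥ 1`, the stationary PMF
`π_σ(x) = w(x)/Σ_y w(y)` (with `w = deathBirthWeight k σ`, i.e. `π_σ(x) = 0` for
`x < k` and `π_σ(k+m) ∝ σ^m/∏_{l=1}^m (k+l)^{(k+1)}`) of the birth–death chain with
birth rate `c` and death rate `d·x^{(k+1)}`, `σ = c/d`, converges in ℓ1 to the
Kronecker-delta PMF centered at `k` as `σ → 0⁺`. -/
theorem higher_resolution_delta_limit (k : ℕ) (hk : 1 ≤ k) :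
    Filter.Tendsto
      (fun σ : ℝ => ∑' x : ℕ,
        |deathBirthWeight k σ x / (∑' y : ℕ, deathBirthWeight k σ y)
          - (if x = k then (1 : ℝ) else 0)|)
      (nhdsWithin 0 (Set.Ioi 0)) (nhds 0) := by
  have h2σ : Tendsto (fun σ : ℝ => 2*σ) (nhdsWithin 0 (Set.Ioi 0)) (nhds 0) := by
    have hc : Continuous (fun σ : ℝ => 2*σ) := by continuity
    simpa using (hc.tendsto 0).mono_left nhdsWithin_le_nhds
  apply tendsto_of_tendsto_of_tendsto_of_le_of_le' tendsto_const_nhds h2σ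
  · filter_upwards with σ
    exact tsum_nonneg fun x => abs_nonneg _
  · filter_upwards [Ioo_mem_nhdsGT_of_mem (by norm_num : (0:ℝ) ∈ Set.Ico (0:ℝ) 1)]
      with σ hσmem
    obtain ⟨hσ0, hσ1⟩ := hσmem
    set w := deathBirthWeight k σ with hwdef
    have hw : Summable w := dbw_summable k σ hσ0.le hσ1 hk
    have hwk : w k = 1 := dbw_self k σ
    have hwnn : ∀ x, 0 ≤ w x := dbw_nonneg k σ hσ0.le
    set S := ∑' y, w y with hSdef
    have hS1 : 1 ≤ S := hwk ▸ Summable.le_tsum hw k (fun i _ => hwnn i)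
    have hS0 : 0 < S := lt_of_lt_of_le one_pos hS1
    -- tail sum T
    set T := ∑' x, (if x = k then 0 else w x) with hTdef
    have hTsummable : Summable (fun x => if x = k then 0 else w x) :=
      Summable.of_nonneg_of_le (fun x => by split <;> simp [hwnn]) (fun x => by split <;> simp [hwnn]) hw
    have hST : S = 1 + T := by rw [hSdef, Summable.tsum_eq_add_tsum_ite hw k, hwk]
    -- bound on T
    have hu : ∀ x, (if x = k then 0 else w x) ≤ (if x ≤ k then 0 else (σ/2)^(x-k)) := by
      intro x
      rcases lt_trichotomy x k with h | h | h
      · simp [h.le, h.ne, hwdef, deathBirthWeight, h]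
      · simp [h]
      · have h1 : ¬ x = k := by omega
        have h2 : ¬ x ≤ k := by omega
        simp only [h1, h2, if_false]
        exact dbw_le k σ hσ0.le hk x
    have hunn : ∀ x : ℕ, 0 ≤ (if x ≤ k then (0:ℝ) else (σ/2)^(x-k)) := by
      intro x; split <;> positivity
    have hule : ∀ x : ℕ, (if x ≤ k then (0:ℝ) else (σ/2)^(x-k)) ≤ (σ/2)^(x-k) := by
      intro x; split
      · positivity
      · exact le_rfl
    have husum := Summable.of_nonneg_of_le hunn hule (geo_summable k σ hσ0.le hσ1)
    have hutsum : ∑' x : ℕ, (if x ≤ k then 0 else (σ/2)^(x-k)) ≤ σ := by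
      have hshift := Summable.sum_add_tsum_nat_add (k+1) husum
      have hzero : ∑ i ∈ Finset.range (k+1), (if i ≤ k then (0:ℝ) else (σ/2)^(i-k)) = 0 := by
        apply Finset.sum_eq_zero
        intro i hi
        have : i ≤ k := by have := Finset.mem_range.mp hi; omega
        simp [this]
      have htail : (fun n : ℕ => if n + (k+1) ≤ k then (0:ℝ) else (σ/2)^(n+(k+1)-k))
          = fun n : ℕ => (σ/2) * (σ/2)^n := by
        funext n
        have h1 : ¬ n + (k+1) ≤ k := by omega
        have h2 : n + (k+1) - k = n + 1 := by omega
        simp [h1, h2, pow_succ, mul_comm]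
      rw [← hshift, hzero, zero_add, htail, tsum_mul_left,
        tsum_geometric_of_lt_one (by positivity) (by linarith)]
      have hinv : (1 - σ/2)⁻¹ ≤ 2 := by
        rw [inv_le_comm₀ (by linarith) (by norm_num)]
        linarith
      calc σ/2 * (1-σ/2)⁻¹ ≤ σ/2 * 2 := by
            apply mul_le_mul_of_nonneg_left hinv (by positivity)

        _ = σ := by ring
    have hT : T ≤ σ := le_trans (Summable.tsum_le_tsum hu hTsummable husum) hutsum
    -- the delta pmf
    have hδ : Summable (fun x : ℕ => if x = k then (1:ℝ) else 0) := by
      apply summable_of_ne_finset_zero (s := ({k} : Finset ℕ))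
      intro b hb
      simp only [Finset.mem_singleton] at hb
      simp [hb]
    have habs : Summable (fun x : ℕ => |w x / S - (if x = k then (1:ℝ) else 0)|) :=
      ((hw.div_const S).sub hδ).abs
    -- compute the l1 distance
    have hsplit := Summable.tsum_eq_add_tsum_ite habs k
    have hinner : (fun x : ℕ => if x = k then (0:ℝ) else |w x / S - (if x = k then (1:ℝ) else 0)|)
        = fun x : ℕ => (if x = k then (0:ℝ) else w x) / S := by
      funext x
      by_cases h : x = k
      · simp [h]
      · simp [h, abs_of_nonneg (div_nonneg (hwnn x) hS0.le)]
    calc (∑' x : ℕ, |w x / S - (if x = k then (1:ℝ) else 0)|)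
        = |w k / S - 1| + ∑' x : ℕ, (if x = k then (0:ℝ) else w x) / S := by
          rw [hsplit, hinner]; simp
      _ = (1 - 1/S) + T/S := by
          rw [tsum_div_const, ← hTdef, hwk]
          congr 1
          rw [abs_of_nonpos (by rw [sub_nonpos, div_le_one hS0]; exact hS1)]
          ring
      _ ≤ T + T := by
          have h1 : 1 - 1/S ≤ T := by
            have : 1 - 1/S = (S-1)/S := by field_simp
            rw [this, hST]
            simpa using div_le_self (by linarith [hT, hσ0.le, (by linarith : (0:ℝ) ≤ T)]) (by linarith)
          have h2 : T/S ≤ T := div_le_self (by linarith [hST]) hS1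
          exact add_le_add h1 h2
      _ ≤ 2*σ := by linarith
end

section
/- Let k ≥ 1 and let p, q : ℕ → ℝ be such that p(x) = 0 for all x ≥ k+1 and, for every x ∈ ℕ, (x+1)^{(k+1)} · q(x+1) − x^{(k+1)} · q(x) = p(x) − p(x−1) (with the convention p(−1) := 0). Then p(x) = 0 for every x ≤ k−1. Consequently, if in addition p ≥ 0 and Σ_{x∈ℕ} p(x) = 1, then p equals the Kronecker-delta PMF centered at k. -/
/-- Order-1 solvability condition of the higher-resolution control.
Let `k ≥ 1` and `p, q : ℕ → ℝ` with `p(x) = 0` for `x ≥ k+1` and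
`(x+1)^{(k+1)} q(x+1) − x^{(k+1)} q(x) = p(x) − p(x−1)` for all `x` (with `p(−1) = 0`).
Then `p(x) = 0` for all `x ≤ k−1`; consequently, if `p ≥ 0` and `Σ p = 1`, then `p` is
the Kronecker-delta PMF centered at `k`. -/
theorem solvability_forces_delta
    (k : ℕ) (hk : 1 ≤ k) (p q : ℕ → ℝ)
    (hp : ∀ x : ℕ, k + 1 ≤ x → p x = 0)
    (heq : ∀ x : ℕ,
      ((x + 1).descFactorial (k + 1) : ℝ) * q (x + 1)
          - (x.descFactorial (k + 1) : ℝ) * q x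
        = p x - (if x = 0 then 0 else p (x - 1))) :
    (∀ x : ℕ, x ≤ k - 1 → p x = 0) ∧
    ((∀ x, 0 ≤ p x) → (∑' x : ℕ, p x = 1) →
      ∀ x : ℕ, p x = if x = k then 1 else 0) := by
  have key : ∀ x : ℕ, ((x + 1).descFactorial (k + 1) : ℝ) * q (x + 1) = p x := by
    intro x
    induction x with
    | zero =>
      have h := heq 0
      simp [Nat.descFactorial_eq_zero_iff_lt.mpr (by omega : 0 < k + 1)] at h
      simpa using h
    | succ n ih =>
      have h := heq (n + 1)
      simp only [if_neg (Nat.succ_ne_zero n), Nat.add_sub_cancel] at h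
      rw [ih] at h
      linarith
  have hzero : ∀ x : ℕ, x ≤ k - 1 → p x = 0 := by
    intro x hx
    have h0 : (x + 1).descFactorial (k + 1) = 0 :=
      Nat.descFactorial_eq_zero_iff_lt.mpr (by omega)
    have := key x
    rw [h0] at this
    simpa using this.symm
  refine ⟨hzero, fun hpos hsum x => ?_⟩
  have hne : ∀ y : ℕ, y ≠ k → p y = 0 := by
    intro y hy
    rcases lt_or_gt_of_ne hy with h | h
    · exact hzero y (by omega)
    · exact hp y (by omega)
  have hpk : p k = 1 := by
    rw [← hsum]
    exact (tsum_eq_single k hne).symm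
  by_cases hx : x = k
  · simp [hx, hpk]
  · simp [hx, hne x hx]
end

section
/- Fix n ≥ 1, M ≥ 2, target states x_{i,j} ∈ ℕ (for i = 1,…,M, j = 1,…,n), and switching rates β₁,…,β_M > 0; let π_i = (1/β_i)/(Σ_{l=1}^M 1/β_l) and define p₀ : ℕⁿ × {1,…,M} → ℝ by p₀(x, i) = π_i · ∏_{j=1}^n δ_{x_j, x_{i,j}}. Then: (a) p₀ is a probability mass function; (b) for every i and every x ∈ ℕⁿ, Σ_{j=1}^n [ (x_j+1)^{(x_{i,j}+1)}·p₀(x + e_j, i) − x_j^{(x_{i,j}+1)}·p₀(x, i) ] = 0, i.e. each section p₀(·, i) is annihilated by the leading-order (death) forward operator of the higher-resolution interfacing network in environment Y_i; (c) for every i, β_{i−1}·π_{i−1} = β_i·π_i (indices mod M), i.e. the {1,…,M}-marginal of p₀ is stationary for the cyclic switching network. Hence the zero-order marginal PMF of the target species is the Kronecker-delta mixture Σ_{i=1}^M a_i(β)·∏_{j=1}^n δ_{x_j, x_{i,j}} with weights a_i(β) = π_i. -/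
/-- Higher-resolution control: with switching weights
`π_i = (1/β_i)/(Σ_l 1/β_l)` and target states `x_{i,j}`, the function
`p₀(x,i) = π_i ∏_j δ_{x_j, x_{i,j}}` is (a) a PMF on `ℕⁿ × {1,…,M}`;
(b) each section `p₀(·,i)` is annihilated by the leading-order (death) forward operator
with propensities `x_j^{(x_{i,j}+1)}`; and (c) the `{1,…,M}`-marginal satisfies the
cyclic-balance condition `β_{i−1} π_{i−1} = β_i π_i` (indices mod `M`). -/
theorem higher_resolution_zero_order_pmf
    (n : ℕ) (hn : 1 ≤ n) (M : ℕ) (hM : 2 ≤ M)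
    (xt : Fin M → Fin n → ℕ) (β : Fin M → ℝ) (hβ : ∀ i, 0 < β i) :
    ∀ π : Fin M → ℝ, (π = fun i => (1 / β i) / ∑ l, 1 / β l) →
    ∀ p₀ : (Fin n → ℕ) → Fin M → ℝ,
      (p₀ = fun x i => π i * ∏ j, (if x j = xt i j then (1 : ℝ) else 0)) →
      -- (a) probability mass function
      (((∀ x i, 0 ≤ p₀ x i) ∧
        Summable (fun z : (Fin n → ℕ) × Fin M => p₀ z.1 z.2) ∧
        (∑' z : (Fin n → ℕ) × Fin M, p₀ z.1 z.2 = 1)) ∧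
      -- (b) each section annihilated by the leading-order death operator
       (∀ i : Fin M, ∀ x : Fin n → ℕ,
          ∑ j, (((x j + 1).descFactorial (xt i j + 1) : ℝ)
                  * p₀ (Function.update x j (x j + 1)) i
               - ((x j).descFactorial (xt i j + 1) : ℝ) * p₀ x i) = 0) ∧
      -- (c) cyclic balance for the switching marginal (indices mod M)
       (∀ i i' : Fin M, ((i : ℕ) + 1) % M = (i' : ℕ) → β i * π i = β i' * π i')) := by
  intro π hπ p₀ hp₀
  have hSpos : 0 < ∑ l, 1 / β l := by
    apply Finset.sum_pos
    · intro l _; exact div_pos one_pos (hβ l)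
    · exact Finset.univ_nonempty_iff.mpr ⟨⟨0, by omega⟩⟩
  have hπpos : ∀ i, 0 < π i := by
    intro i; rw [hπ]; exact div_pos (div_pos one_pos (hβ i)) hSpos
  have hsumπ : ∑ i, π i = 1 := by
    rw [hπ, ← Finset.sum_div, div_self hSpos.ne']
  have hp : ∀ x i, p₀ x i = if x = xt i then π i else 0 := by
    intro x i
    rw [hp₀]
    by_cases h : x = xt i
    · simp [h]
    · simp only [if_neg h]
      obtain ⟨j, hj⟩ : ∃ j, x j ≠ xt i j := by
        by_contra hc; push_neg at hc; exact h (funext hc)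
      rw [Finset.prod_eq_zero (Finset.mem_univ j) (by simp [hj])]
      ring
  set s : Finset ((Fin n → ℕ) × Fin M) :=
    Finset.univ.image (fun i : Fin M => ((xt i, i) : (Fin n → ℕ) × Fin M)) with hs
  have hvanish : ∀ z : (Fin n → ℕ) × Fin M, z ∉ s → p₀ z.1 z.2 = 0 := by
    intro z hz
    rw [hp]
    by_cases h : z.1 = xt z.2
    · exfalso
      apply hz
      rw [hs]
      refine Finset.mem_image.mpr ⟨z.2, Finset.mem_univ _, ?_⟩
      exact Prod.ext h.symm rfl
    · rw [if_neg h]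
  have hsum_s : ∑ z ∈ s, p₀ z.1 z.2 = 1 := by
    rw [hs, Finset.sum_image (by intro a _ b _ hab; exact congrArg Prod.snd hab)]
    calc ∑ i, p₀ (xt i) i = ∑ i, π i := by
            refine Finset.sum_congr rfl fun i _ => ?_
            rw [hp, if_pos rfl]
      _ = 1 := hsumπ
  refine ⟨⟨?_, ?_, ?_⟩, ?_, ?_⟩
  · intro x i
    rw [hp]
    split_ifs with h
    · exact (hπpos i).le
    · exact le_rfl
  · exact summable_of_ne_finset_zero hvanish
  · rw [tsum_eq_sum hvanish]; exact hsum_s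
  · intro i x
    apply Finset.sum_eq_zero
    intro j _
    have h1 : ((x j + 1).descFactorial (xt i j + 1) : ℝ)
        * p₀ (Function.update x j (x j + 1)) i = 0 := by
      rw [hp]
      split_ifs with h
      · have hej : x j + 1 = xt i j := by
          have := congrFun h j
          simpa using this
        have : (x j + 1).descFactorial (xt i j + 1) = 0 :=
          Nat.descFactorial_eq_zero_iff_lt.mpr (by omega)
        rw [this, Nat.cast_zero, zero_mul]
      · ring
    have h2 : ((x j).descFactorial (xt i j + 1) : ℝ) * p₀ x i = 0 := by
      rw [hp]
      split_ifs with h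
      · have hej : x j = xt i j := congrFun h j
        have : (x j).descFactorial (xt i j + 1) = 0 :=
          Nat.descFactorial_eq_zero_iff_lt.mpr (by omega)
        rw [this, Nat.cast_zero, zero_mul]
      · ring
    rw [h1, h2, sub_zero]
  · intro i i' _
    rw [hπ]
    simp only
    have h1 := (hβ i).ne'
    have h2 := (hβ i').ne'
    have hS := hSpos.ne'
    field_simp
end
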